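/- Let I ⊂ S = K[x_1,...,x_n] be a squarefree monomial ideal with n > 1, and suppose (x_1···x_n)^{k−1} is a socle element of S/I^k. Then depth S/I^j > 0 for all j < k, i.e., S/I^j has no nonzero socle element for j < k. -/
import Mathlib

open MvPolynomial Pointwise

namespace Stmt10Aux

variable {n : ℕ} {K : Type*} [Field K]

/-- Exponent vector of the squarefree monomial `∏ i ∈ F, X i`. -/
noncomputable def eF (F : Finset (Fin n)) : Fin n →₀ ℕ := ∑ i ∈ F, Finsupp.single i 1

lemma eF_apply (F : Finset (Fin n)) (i : Fin n) : eF F i = if i ∈ F then 1 else 0 := by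
  classical
  simp [eF, Finsupp.finset_sum_apply, Finsupp.single_apply]

lemma eF_le_one (F : Finset (Fin n)) (i : Fin n) : eF F i ≤ 1 := by
  rw [eF_apply]; split <;> omega

lemma eF_insert {a : Fin n} {F : Finset (Fin n)} (h : a ∉ F) :
    eF (insert a F) = Finsupp.single a 1 + eF F := by
  rw [eF, Finset.sum_insert h]; rfl

lemma prod_X_eq (F : Finset (Fin n)) :
    (∏ i ∈ F, (X i : MvPolynomial (Fin n) K)) = monomial (eF F) 1 := by
  classical
  induction F using Finset.induction with
  | empty => simp [eF]
  | @insert a F h ih =>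
      have hX : (X a : MvPolynomial (Fin n) K) = monomial (Finsupp.single a 1) 1 := rfl
      rw [Finset.prod_insert h, ih, hX, monomial_mul, one_mul, eF_insert h]

/-- `j`-fold sumset of the exponent vectors of the generators. -/
def Esum (𝒮 : Set (Finset (Fin n))) : ℕ → Set (Fin n →₀ ℕ)
  | 0 => {0}
  | j + 1 => (eF '' 𝒮) + Esum 𝒮 j

lemma span_mono_mul (A B : Set (Fin n →₀ ℕ)) :
    Ideal.span ((fun s => monomial s (1 : K)) '' A) *
      Ideal.span ((fun s => monomial s (1 : K)) '' B) =
    Ideal.span ((fun s => monomial s (1 : K)) '' (A + B)) := by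
  rw [Ideal.span_mul_span']
  congr 1
  ext x
  constructor
  · rintro ⟨-, ⟨a, ha, rfl⟩, -, ⟨b, hb, rfl⟩, rfl⟩
    exact ⟨a + b, Set.add_mem_add ha hb, by simp [monomial_mul]⟩
  · rintro ⟨-, ⟨a, ha, b, hb, rfl⟩, rfl⟩
    exact ⟨monomial a 1, ⟨a, ha, rfl⟩, monomial b 1, ⟨b, hb, rfl⟩,
      by simp [monomial_mul]⟩

lemma span_pow (𝒮 : Set (Finset (Fin n))) : ∀ j : ℕ,
    (Ideal.span ((fun s => monomial s (1 : K)) '' (eF '' 𝒮))) ^ j =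
      Ideal.span ((fun s => monomial s (1 : K)) '' Esum 𝒮 j)
  | 0 => by
      rw [pow_zero, Esum]
      have : ((fun s => monomial s (1 : K)) '' ({0} : Set (Fin n →₀ ℕ))) = {1} := by
        simp [Set.image_singleton]
      rw [this, Ideal.span_singleton_one, Ideal.one_eq_top]
  | j + 1 => by
      rw [pow_succ', span_pow 𝒮 j, span_mono_mul, Esum]

lemma mono_mem_iff {T : Set (Fin n →₀ ℕ)} (b : Fin n →₀ ℕ) :
    monomial b (1 : K) ∈ Ideal.span ((fun s => monomial s (1 : K)) '' T) ↔
      ∃ c ∈ T, c ≤ b := by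
  rw [mem_ideal_span_monomial_image]
  simp [support_monomial]

lemma Esum_add_mem {𝒮 : Set (Finset (Fin n))} :
    ∀ {m₁ : ℕ} {m₂ : ℕ} {c d : Fin n →₀ ℕ}, c ∈ Esum 𝒮 m₁ → d ∈ Esum 𝒮 m₂ →
      c + d ∈ Esum 𝒮 (m₁ + m₂) := by
  intro m₁
  induction m₁ with
  | zero =>
      intro m₂ c d hc hd
      simp only [Esum, Set.mem_singleton_iff] at hc
      simpa [hc] using hd
  | succ m ih =>
      intro m₂ c d hc hd
      obtain ⟨x, hx, y, hy, rfl⟩ := hc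
      have h1 : x + y + d = x + (y + d) := add_assoc x y d
      have h2 : m + 1 + m₂ = (m + m₂) + 1 := by omega
      rw [h1, h2]
      exact Set.add_mem_add hx (ih hy hd)

lemma nsmul_mem_Esum {𝒮 : Set (Finset (Fin n))} {F : Finset (Fin n)} (hF : F ∈ 𝒮) :
    ∀ m : ℕ, m • eF F ∈ Esum 𝒮 m
  | 0 => by simp [Esum]
  | m + 1 => by
      rw [succ_nsmul']
      exact Set.add_mem_add ⟨F, hF, rfl⟩ (nsmul_mem_Esum hF m)

lemma Esum_apply_le {𝒮 : Set (Finset (Fin n))} :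
    ∀ {m : ℕ} {c : Fin n →₀ ℕ}, c ∈ Esum 𝒮 m → ∀ p : Fin n, c p ≤ m := by
  intro m
  induction m with
  | zero => intro c hc p; simp only [Esum, Set.mem_singleton_iff] at hc; simp [hc]
  | succ m ih =>
      rintro c ⟨x, ⟨F, hF, rfl⟩, y, hy, rfl⟩ p
      have h1 := eF_le_one F p
      have h2 := ih hy p
      simp only [Finsupp.add_apply]
      omega

lemma Esum_exists_avoid {𝒮 : Set (Finset (Fin n))} {q : Fin n} :
    ∀ {m : ℕ} {c : Fin n →₀ ℕ}, c ∈ Esum 𝒮 m → c q < m →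
      ∃ F ∈ 𝒮, eF F q = 0 := by
  intro m
  induction m with
  | zero => intro c _ h; omega
  | succ m ih =>
      rintro c ⟨x, ⟨F, hF, rfl⟩, y, hy, rfl⟩ h
      by_cases hq : eF F q = 0
      · exact ⟨F, hF, hq⟩
      · have h1 := eF_le_one F q
        have : y q < m := by
          simp only [Finsupp.add_apply] at h; omega
        exact ih hy this

end Stmt10Aux

open Stmt10Aux

/-- If `n > 1` and `(x₁⋯xₙ)^(k-1)` is a socle element of `S/I^k` for a squarefree
monomial ideal `I`, then `S/I^j` has no nonzero (monomial) socle element for `j < k`,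
i.e. `depth S/I^j > 0`. -/
theorem stmt10 (n : ℕ) (hn : 1 < n) (K : Type*) [Field K]
    (𝒮 : Set (Finset (Fin n)))
    (I : Ideal (MvPolynomial (Fin n) K))
    (hI : I = Ideal.span ((fun F : Finset (Fin n) => ∏ i ∈ F, (X i : MvPolynomial (Fin n) K)) '' 𝒮))
    (k : ℕ) (hk : 1 ≤ k)
    (hsoc : (∏ i : Fin n, (X i : MvPolynomial (Fin n) K)) ^ (k - 1) ∉ I ^ k ∧
      ∀ j : Fin n, X j * (∏ i : Fin n, (X i : MvPolynomial (Fin n) K)) ^ (k - 1) ∈ I ^ k) :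
    ∀ j : ℕ, j < k →
      ¬ ∃ a : Fin n →₀ ℕ, (monomial a (1 : K)) ∉ I ^ j ∧
        ∀ i : Fin n, X i * monomial a (1 : K) ∈ I ^ j := by
  classical
  -- rewrite I as a span of monomials
  have hI' : I = Ideal.span ((fun s => monomial s (1 : K)) '' (eF '' 𝒮)) := by
    rw [hI, Set.image_image]
    congr 1
    exact Set.image_congr fun F _ => prod_X_eq F
  have hpow : ∀ m : ℕ, I ^ m = Ideal.span ((fun s => monomial s (1 : K)) '' Esum 𝒮 m) := by
    intro m; rw [hI', span_pow]
  have hmem : ∀ (m : ℕ) (b : Fin n →₀ ℕ),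
      monomial b (1 : K) ∈ I ^ m ↔ ∃ c ∈ Esum 𝒮 m, c ≤ b := by
    intro m b; rw [hpow m]; exact mono_mem_iff b
  have hX : ∀ i : Fin n, (X i : MvPolynomial (Fin n) K) = monomial (Finsupp.single i 1) 1 :=
    fun i => rfl
  have hv : (∏ i : Fin n, (X i : MvPolynomial (Fin n) K)) ^ (k - 1) =
      monomial ((k - 1) • eF Finset.univ) 1 := by
    rw [prod_X_eq, monomial_pow, one_pow]
  -- pick indices i₀ ≠ q
  set i₀ : Fin n := ⟨0, by omega⟩ with hi₀
  set q : Fin n := ⟨1, hn⟩ with hq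
  have hne : i₀ ≠ q := by simp [hi₀, hq, Fin.ext_iff]
  -- find a generator F* avoiding q
  have hXiv : (X i₀ : MvPolynomial (Fin n) K) * (∏ i : Fin n, X i) ^ (k - 1) =
      monomial (Finsupp.single i₀ 1 + (k - 1) • eF Finset.univ) 1 := by
    rw [hv, hX i₀, monomial_mul, one_mul]
  have hmemk : monomial (Finsupp.single i₀ 1 + (k - 1) • eF Finset.univ) (1 : K) ∈ I ^ k := by
    rw [← hXiv]; exact hsoc.2 i₀
  obtain ⟨c₀, hc₀, hc₀le⟩ := (hmem k _).mp hmemk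
  have hFstar : ∃ F ∈ 𝒮, eF F q = 0 := by
    apply Esum_exists_avoid hc₀
    have h := hc₀le q
    simp only [Finsupp.add_apply, Finsupp.smul_apply, smul_eq_mul] at h
    rw [Finsupp.single_apply, if_neg hne, eF_apply, if_pos (Finset.mem_univ q)] at h
    omega
  obtain ⟨Fs, hFs𝒮, hFsq⟩ := hFstar
  -- main argument
  intro j hjk
  rintro ⟨a, hu, hsocj⟩
  rcases Nat.eq_zero_or_pos j with hj0 | hj1
  · subst hj0
    exact hu (by simp)
  -- for each i, extract a witness for x_i · x^a ∈ I^j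
  have key : ∀ i : Fin n, ∃ c ∈ Esum 𝒮 j, c ≤ Finsupp.single i 1 + a ∧ c i = a i + 1 := by
    intro i
    have hXieq : (X i : MvPolynomial (Fin n) K) * monomial a 1 =
        monomial (Finsupp.single i 1 + a) 1 := by
      rw [hX i, monomial_mul, one_mul]
    have hXu : monomial (Finsupp.single i 1 + a) (1 : K) ∈ I ^ j := by
      rw [← hXieq]; exact hsocj i
    obtain ⟨c, hc, hcle⟩ := (hmem j _).mp hXu
    refine ⟨c, hc, hcle, ?_⟩
    have hnotle : ¬ c ≤ a := fun hle => hu ((hmem j a).mpr ⟨c, hc, hle⟩)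
    rw [Finsupp.le_def, not_forall] at hnotle
    obtain ⟨p, hp⟩ := hnotle
    have hcp := hcle p
    simp only [Finsupp.add_apply] at hcp
    by_cases hpi : p = i
    · subst hpi
      rw [Finsupp.single_apply, if_pos rfl] at hcp
      omega
    · rw [Finsupp.single_apply, if_neg (Ne.symm hpi)] at hcp
      omega
  -- every exponent of a is ≤ j - 1
  have hai : ∀ i : Fin n, a i + 1 ≤ j := by
    intro i
    obtain ⟨c, hc, -, hci⟩ := key i
    have := Esum_apply_le hc i
    omega
  -- combine the witness at q with copies of F* to contradict hsoc.1
  obtain ⟨c, hc, hcle, hcq⟩ := key q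
  have hd : c + (k - j) • eF Fs ∈ Esum 𝒮 k := by
    have h := Esum_add_mem hc (nsmul_mem_Esum hFs𝒮 (k - j))
    rwa [Nat.add_sub_cancel' (le_of_lt hjk)] at h
  have hle : c + (k - j) • eF Fs ≤ (k - 1) • eF Finset.univ := by
    rw [Finsupp.le_def]
    intro p
    have huniv : eF (Finset.univ : Finset (Fin n)) p = 1 := by
      rw [eF_apply, if_pos (Finset.mem_univ p)]
    simp only [Finsupp.add_apply, Finsupp.smul_apply, smul_eq_mul, huniv, mul_one]
    by_cases hpq : p = q
    · subst hpq
      rw [hFsq, mul_zero, hcq]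
      have := hai q
      omega
    · have h1 : c p ≤ a p := by
        have h := hcle p
        simp only [Finsupp.add_apply] at h
        rwa [Finsupp.single_apply, if_neg (fun h' => hpq h'.symm), zero_add] at h
      have h2 : (k - j) * eF Fs p ≤ k - j := by
        calc (k - j) * eF Fs p ≤ (k - j) * 1 := Nat.mul_le_mul_left _ (eF_le_one Fs p)
        _ = k - j := Nat.mul_one _
      have h3 := hai p
      omega
  exact hsoc.1 (by rw [hv]; exact (hmem k _).mpr ⟨_, hd, hle⟩)
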